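/- arXiv:1312.7150 — 6 statements merged into one kernel-verified Lean document; each statement's English description precedes it below -/
import Mathlib

section
/- Let (e_i)_{i≥0} be i.i.d. real-valued random variables with common law μ, let X₀ be a real-valued random variable such that for every n ≥ 1 the variable e_n is independent of (X₀, e₀, …, e_{n−1}), fix real numbers r > 0 and s, and define X_i = r·X_{i−1} + e_i + s·e_{i−1} for i ≥ 1; set M_n = max_{1≤i≤n} X_i and fix x ∈ ℝ. Let ν₀ be the joint law of (X₀, e₀) on ℝ², and for n ≥ 1 let ν_n be the sub-probability measure on ℝ² defined by ν_n(B) = P(M_n ≤ x and (X_n, e_n) ∈ B) for Borel sets B. Define the sub-Markov kernel κ from ℝ² to ℝ² by κ(z₀, z₁)(B) = μ{ t ∈ ℝ : r·z₀ + t + s·z₁ ≤ x and (r·z₀ + t + s·z₁, t) ∈ B }. Then for every n ≥ 1, ν_n = ν_{n−1}.bind κ, i.e., ν_n(B) = ∫_{ℝ²} κ(z)(B) dν_{n−1}(z) for all Borel B ⊆ ℝ². -/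
/-!
On `{M_{n-1} ≤ x}` one has `M_n ≤ x ↔ X_n ≤ x`, and `X_n = r X_{n-1} + e_n + s e_{n-1}`.
The event `{M_{n-1} ≤ x}` and the pair `(X_{n-1}, e_{n-1})` are functions of the past
`(X₀, e₀, …, e_{n-1})`, which is independent of `e_n`; integrating out `e_n ~ μ` (Fubini for the
product law) gives `ν_n(B) = ∫_{M_{n-1} ≤ x} κ(X_{n-1}, e_{n-1})(B) dℙ = (ν_{n-1}.bind κ)(B)`.
-/

open MeasureTheory ProbabilityTheory

section Independence

variable {Ω α β : Type*} {m mΩ : MeasurableSpace Ω} [MeasurableSpace α] [MeasurableSpace β]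
  {P : Measure Ω} [IsFiniteMeasure P] {W : Ω → α} {T : Ω → β} {D : Set (α × β)}

theorem measure_preimage_prod_eq_lintegral_of_indepFun (hW : Measurable W) (hT : Measurable T)
    (hind : IndepFun W T P) (hD : MeasurableSet D) :
    P ((fun ω => (W ω, T ω)) ⁻¹' D) = ∫⁻ ω, P.map T (Prod.mk (W ω) ⁻¹' D) ∂P := by
  rw [← Measure.map_apply (hW.prodMk hT) hD,
    (indepFun_iff_map_prod_eq_prod_map_map hW.aemeasurable hT.aemeasurable).mp hind,
    Measure.prod_apply hD, lintegral_map (measurable_measure_prodMk_left hD) hW]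

theorem measure_inter_preimage_prod_eq_setLIntegral_of_indep (hm : m ≤ mΩ)
    {A : Set Ω} (hA : MeasurableSet[m] A) (hW : Measurable[m] W) (hT : Measurable T)
    (hind : Indep m (MeasurableSpace.comap T inferInstance) P) (hD : MeasurableSet D) :
    P (A ∩ (fun ω => (W ω, T ω)) ⁻¹' D) = ∫⁻ ω in A, P.map T (Prod.mk (W ω) ⁻¹' D) ∂P := by
  -- Remembering membership in `A` as a Prop-valued coordinate turns `A ∩ ·` into a preimage.
  set W' : Ω → Prop × α := fun ω => (ω ∈ A, W ω)
  set D' : Set ((Prop × α) × β) := {q | q.1.1 ∧ (q.1.2, q.2) ∈ D}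
  have hW' : Measurable[m] W' := (@measurableSet_setOfPred Ω m _).mp hA |>.prodMk hW
  have hD' : MeasurableSet D' := measurableSet_setOfPred.mpr <|
    (measurable_fst.comp measurable_fst).and
      (measurableSet_setOfPred.mp (((measurable_snd.comp measurable_fst).prodMk measurable_snd) hD))
  have hind' : IndepFun W' T P :=
    (IndepFun_iff_Indep W' T P).mpr (indep_of_indep_of_le_left hind hW'.comap_le)
  have hsection (ω : Ω) : P.map T (Prod.mk (W' ω) ⁻¹' D') =
      A.indicator (fun ω => P.map T (Prod.mk (W ω) ⁻¹' D)) ω := by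
    by_cases h : ω ∈ A
    · simp [W', D', h]; rfl
    · simp [W', D', h]
  calc P (A ∩ (fun ω => (W ω, T ω)) ⁻¹' D) = P ((fun ω => (W' ω, T ω)) ⁻¹' D') := rfl
    _ = ∫⁻ ω, P.map T (Prod.mk (W' ω) ⁻¹' D') ∂P :=
      measure_preimage_prod_eq_lintegral_of_indepFun (hW'.mono hm le_rfl) hT hind' hD'
    _ = ∫⁻ ω in A, P.map T (Prod.mk (W ω) ⁻¹' D) ∂P := by
      simp_rw [hsection]
      exact lintegral_indicator (hm A hA) _

end Independence

section ARMA

variable {Ω : Type*} {mΩ : MeasurableSpace Ω} {e X : ℕ → Ω → ℝ} {r s x : ℝ}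

abbrev pastSigma (X₀ : Ω → ℝ) (e : ℕ → Ω → ℝ) (n : ℕ) : MeasurableSpace Ω :=
  MeasurableSpace.comap (fun ω => (X₀ ω, fun i : Fin n => e i ω)) inferInstance

theorem pastSigma_le (hX₀ : Measurable X₀) (he : ∀ i, Measurable (e i)) (n : ℕ) :
    pastSigma X₀ e n ≤ mΩ :=
  Measurable.comap_le (f := fun ω => (X₀ ω, fun i : Fin n => e i ω))
    (hX₀.prodMk (measurable_pi_lambda _ fun i => he i))

theorem measurable_pastSigma_error {n i : ℕ} (hi : i < n) : Measurable[pastSigma X₀ e n] (e i) :=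
  ((measurable_pi_apply (⟨i, hi⟩ : Fin n)).comp measurable_snd).comp
    (comap_measurable fun ω => (X₀ ω, fun i : Fin n => e i ω))

theorem measurable_pastSigma_of_arma_recursion
    (hX : ∀ i, 1 ≤ i → ∀ ω, X i ω = r * X (i - 1) ω + e i ω + s * e (i - 1) ω) {n : ℕ} :
    ∀ i < n, Measurable[pastSigma (X 0) e n] (X i)
  | 0, _ => measurable_fst.comp (comap_measurable fun ω => (X 0 ω, fun i : Fin n => e i ω))
  | i + 1, hi => by
    have hXi : X (i + 1) = fun ω => r * X i ω + e (i + 1) ω + s * e i ω :=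
      funext (hX (i + 1) (Nat.le_add_left 1 i))
    rw [hXi]
    exact (((measurable_pastSigma_of_arma_recursion hX i (by omega)).const_mul r).add
      (measurable_pastSigma_error hi)).add ((measurable_pastSigma_error (by omega)).const_mul s)

theorem measurableSet_forall_le_of_measurable {m : ℕ} (hX : ∀ i ≤ m, Measurable (X i)) :
    MeasurableSet {ω | ∀ i, 1 ≤ i → i ≤ m → X i ω ≤ x} := by
  have : {ω | ∀ i, 1 ≤ i → i ≤ m → X i ω ≤ x} = ⋂ i ∈ Set.Icc 1 m, {ω | X i ω ≤ x} := by
    ext ω; simp [and_imp]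
  rw [this]
  exact MeasurableSet.biInter (Set.to_countable _) fun i hi =>
    measurableSet_le (hX i hi.2) measurable_const

def armaStepSet (r s x : ℝ) (B : Set (ℝ × ℝ)) : Set ((ℝ × ℝ) × ℝ) :=
  {q | r * q.1.1 + q.2 + s * q.1.2 ≤ x ∧ (r * q.1.1 + q.2 + s * q.1.2, q.2) ∈ B}

theorem measurableSet_armaStepSet {B : Set (ℝ × ℝ)} (hB : MeasurableSet B) :
    MeasurableSet (armaStepSet r s x B) := by
  have hnext : Measurable fun q : (ℝ × ℝ) × ℝ => r * q.1.1 + q.2 + s * q.1.2 := by fun_prop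
  exact (measurableSet_le hnext measurable_const).inter ((hnext.prodMk measurable_snd) hB)

theorem setOf_forall_le_and_mem_eq_inter
    (hX : ∀ i, 1 ≤ i → ∀ ω, X i ω = r * X (i - 1) ω + e i ω + s * e (i - 1) ω)
    {n : ℕ} (hn : 1 ≤ n) {B : Set (ℝ × ℝ)} :
    {ω | (∀ i, 1 ≤ i → i ≤ n → X i ω ≤ x) ∧ (X n ω, e n ω) ∈ B} =
      {ω | ∀ i, 1 ≤ i → i ≤ n - 1 → X i ω ≤ x} ∩
        (fun ω => ((X (n - 1) ω, e (n - 1) ω), e n ω)) ⁻¹' armaStepSet r s x B := by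
  ext ω
  simp only [Set.mem_inter_iff, Set.mem_preimage, armaStepSet, Set.mem_ofPred_eq, ← hX n hn ω]
  constructor
  · rintro ⟨hle, hB⟩
    exact ⟨fun i hi1 _ => hle i hi1 (by omega), hle n hn le_rfl, hB⟩
  · rintro ⟨hle, hXn, hB⟩
    refine ⟨fun i hi1 hi2 => ?_, hB⟩
    rcases Nat.lt_or_ge i n with hi | hi
    · exact hle i hi1 (by omega)
    · rwa [show i = n by omega]

theorem restrictedLaw_eq_map_restrict {P : Measure Ω} {ν : ℕ → Measure (ℝ × ℝ)}
    (hν0 : ν 0 = P.map (fun ω => (X 0 ω, e 0 ω)))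
    (hν : ∀ n, 1 ≤ n → ∀ B : Set (ℝ × ℝ), MeasurableSet B →
        ν n B = P {ω | (∀ i, 1 ≤ i → i ≤ n → X i ω ≤ x) ∧ (X n ω, e n ω) ∈ B})
    {m : ℕ} (hXm : Measurable (X m)) (hem : Measurable (e m))
    (hA : MeasurableSet {ω | ∀ i, 1 ≤ i → i ≤ m → X i ω ≤ x}) :
    ν m = (P.restrict {ω | ∀ i, 1 ≤ i → i ≤ m → X i ω ≤ x}).map (fun ω => (X m ω, e m ω)) := by
  rcases Nat.eq_zero_or_pos m with rfl | hm
  · have huniv : {ω | ∀ i, 1 ≤ i → i ≤ 0 → X i ω ≤ x} = Set.univ :=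
      Set.eq_univ_of_forall fun _ _ h1 h0 => absurd (h1.trans h0) (by omega)
    rw [huniv, Measure.restrict_univ, hν0]
  · ext B hB
    rw [hν m hm B hB, Measure.map_apply (hXm.prodMk hem) hB, Measure.restrict_apply' hA,
      Set.inter_comm]
    rfl

end ARMA

theorem arma11_restricted_law_bind_general
    {Ω : Type*} [MeasureSpace Ω] [IsProbabilityMeasure (ℙ : Measure Ω)]
    (e X : ℕ → Ω → ℝ) (μ : Measure ℝ)
    (he_meas : ∀ i, Measurable (e i)) (hX0_meas : Measurable (X 0))
    (hlaw : ∀ i, Measure.map (e i) ℙ = μ)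
    (hindep : ∀ n, 1 ≤ n → ProbabilityTheory.IndepFun
        (fun ω => (X 0 ω, fun i : Fin n => e i ω)) (e n) ℙ)
    (r s x : ℝ)
    (hX : ∀ i, 1 ≤ i → ∀ ω, X i ω = r * X (i - 1) ω + e i ω + s * e (i - 1) ω)
    (ν : ℕ → Measure (ℝ × ℝ))
    (hν0 : ν 0 = Measure.map (fun ω => (X 0 ω, e 0 ω)) ℙ)
    (hν : ∀ n, 1 ≤ n → ∀ B : Set (ℝ × ℝ), MeasurableSet B →
        ν n B = ℙ {ω | (∀ i, 1 ≤ i → i ≤ n → X i ω ≤ x) ∧ (X n ω, e n ω) ∈ B})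
    (κ : ProbabilityTheory.Kernel (ℝ × ℝ) (ℝ × ℝ))
    (hκ : ∀ z : ℝ × ℝ, ∀ B : Set (ℝ × ℝ), MeasurableSet B →
        κ z B = μ {t : ℝ | r * z.1 + t + s * z.2 ≤ x ∧ (r * z.1 + t + s * z.2, t) ∈ B})
    (n : ℕ) (hn : 1 ≤ n) :
    ν n = (ν (n - 1)).bind (fun z => κ z) := by
  have hpast_le := pastSigma_le hX0_meas he_meas n
  have hX_past := measurable_pastSigma_of_arma_recursion hX (n := n)
  set A := {ω | ∀ i, 1 ≤ i → i ≤ n - 1 → X i ω ≤ x}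
  have hA : MeasurableSet[pastSigma (X 0) e n] A :=
    measurableSet_forall_le_of_measurable fun i hi => hX_past i (by omega)
  set W : Ω → ℝ × ℝ := fun ω => (X (n - 1) ω, e (n - 1) ω)
  have hW : Measurable[pastSigma (X 0) e n] W :=
    (hX_past (n - 1) (by omega)).prodMk (measurable_pastSigma_error (by omega))
  have hν_prev : ν (n - 1) = ((ℙ : Measure Ω).restrict A).map W :=
    restrictedLaw_eq_map_restrict hν0 hν (hW.fst.mono hpast_le le_rfl)
      (he_meas (n - 1)) (hpast_le A hA)
  ext B hB
  rw [hν n hn B hB, setOf_forall_le_and_mem_eq_inter hX hn,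
    measure_inter_preimage_prod_eq_setLIntegral_of_indep hpast_le hA hW (he_meas n)
      ((IndepFun_iff_Indep _ _ _).mp (hindep n hn)) (measurableSet_armaStepSet hB),
    Measure.bind_apply hB κ.measurable.aemeasurable, hν_prev,
    lintegral_map (κ.measurable_coe hB) (hW.mono hpast_le le_rfl), hlaw n]
  refine setLIntegral_congr_fun (hpast_le A hA) fun ω _ => ?_
  rw [hκ _ B hB]
  rfl

/-- Theorem 2.1, measure–kernel form: for the ARMA(1,1) process
`X_i = r·X_{i−1} + e_i + s·e_{i−1}` with i.i.d. errors `e_i ~ μ`, `r > 0`, the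
restricted joint laws `ν_n(B) = P(M_n ≤ x, (X_n, e_n) ∈ B)` evolve by the fixed
sub-Markov kernel `κ(z₀,z₁)(B) = μ{t : r·z₀+t+s·z₁ ≤ x ∧ (r·z₀+t+s·z₁, t) ∈ B}`:
`ν_n = ν_{n−1}.bind κ` for every `n ≥ 1`. -/
theorem arma11_restricted_law_bind
    {Ω : Type*} [MeasureSpace Ω] [IsProbabilityMeasure (ℙ : Measure Ω)]
    (e X : ℕ → Ω → ℝ) (μ : Measure ℝ)
    (he_meas : ∀ i, Measurable (e i)) (hX0_meas : Measurable (X 0))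
    (hiid : ProbabilityTheory.iIndepFun e ℙ)
    (hlaw : ∀ i, Measure.map (e i) ℙ = μ)
    (hindep : ∀ n, 1 ≤ n → ProbabilityTheory.IndepFun
        (fun ω => (X 0 ω, fun i : Fin n => e i ω)) (e n) ℙ)
    (r s x : ℝ) (hr : 0 < r)
    (hX : ∀ i, 1 ≤ i → ∀ ω, X i ω = r * X (i - 1) ω + e i ω + s * e (i - 1) ω)
    (ν : ℕ → Measure (ℝ × ℝ))
    (hν0 : ν 0 = Measure.map (fun ω => (X 0 ω, e 0 ω)) ℙ)
    (hν : ∀ n, 1 ≤ n → ∀ B : Set (ℝ × ℝ), MeasurableSet B →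
        ν n B = ℙ {ω | (∀ i, 1 ≤ i → i ≤ n → X i ω ≤ x) ∧ (X n ω, e n ω) ∈ B})
    (κ : ProbabilityTheory.Kernel (ℝ × ℝ) (ℝ × ℝ))
    (hκ : ∀ z : ℝ × ℝ, ∀ B : Set (ℝ × ℝ), MeasurableSet B →
        κ z B = μ {t : ℝ | r * z.1 + t + s * z.2 ≤ x ∧ (r * z.1 + t + s * z.2, t) ∈ B})
    (n : ℕ) (hn : 1 ≤ n) :
    ν n = (ν (n - 1)).bind (fun z => κ z) :=
  arma11_restricted_law_bind_general e X μ he_meas hX0_meas hlaw hindep r s x hX ν hν0 hν κ hκ n hn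
end

section
/- Let (e_i)_{i≥0} be i.i.d. real-valued random variables with common law μ, let X₀ be a real-valued random variable such that for every n ≥ 1 the variable e_n is independent of (X₀, e₀, …, e_{n−1}), fix real numbers r > 0 and s, and define X_i = r·X_{i−1} + e_i + s·e_{i−1} for i ≥ 1; set M_n = max_{1≤i≤n} X_i and fix x ∈ ℝ. Let ν₀ be the joint law of (X₀, e₀) on ℝ², and define the sub-Markov kernel κ from ℝ² to ℝ² by κ(z₀, z₁)(B) = μ{ t ∈ ℝ : r·z₀ + t + s·z₁ ≤ x and (r·z₀ + t + s·z₁, t) ∈ B }. Then for every n ≥ 1, P(M_n ≤ x) equals the total mass of the measure obtained by binding ν₀ with κ iterated n times: P(M_n ≤ x) = (ν₀.bind κ.bind κ … (n times))(ℝ²). -/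
open MeasureTheory
open scoped ProbabilityTheory

/-!
Let `E_n = {X₁ ≤ x, …, X_n ≤ x}` and let `ν_n` be the law of `(X_n, e_n)` restricted to `E_n`, so
`ν_0 = ν₀` and `ν_n(ℝ²) = P(M_n ≤ x)`. Since `E_{n+1} = E_n ∩ {r X_n + e_{n+1} + s e_n ≤ x}` and
`(X_n, e_n, 1_{E_n})` is a function of `(X₀, e₀, …, e_n)`, which is independent of `e_{n+1}`, the
restricted joint law of `((X_n, e_n), e_{n+1})` is `ν_n ⊗ μ`. Integrating out `e_{n+1}` gives
exactly `ν_{n+1} = ν_n.bind κ`.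
-/

open ProbabilityTheory

theorem MeasureTheory.Measure.bind_eq_map_restrict_prod {α β γ : Type*} [MeasurableSpace α]
    [MeasurableSpace β] [MeasurableSpace γ] (ν : Measure α) (μ : Measure β) [SFinite μ]
    (κ : Kernel α γ) {S : Set (α × β)} (hS : MeasurableSet S) {φ : α × β → γ}
    (hφ : Measurable φ) (hκ : ∀ z B, MeasurableSet B → κ z B = μ {t | (z, t) ∈ S ∧ φ (z, t) ∈ B}) :
    ν.bind κ = ((ν.prod μ).restrict S).map φ := by
  ext B hB
  rw [Measure.bind_apply hB κ.aemeasurable, Measure.map_apply hφ hB,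
    Measure.restrict_apply (hφ hB), Measure.prod_apply ((hφ hB).inter hS)]
  refine lintegral_congr fun z => ?_
  rw [hκ z B hB]
  congr 1
  ext t
  exact and_comm

theorem ProbabilityTheory.IndepFun.map_restrict_prodMk_eq_prod {Ω β γ δ : Type*}
    [MeasurableSpace Ω] [mβ : MeasurableSpace β] [MeasurableSpace γ] [MeasurableSpace δ]
    {P : Measure Ω} [IsFiniteMeasure P] {Y : Ω → β} {ε : Ω → γ} {W : Ω → δ} {E : Set Ω}
    (hind : IndepFun Y ε P) (hY : Measurable Y) (hε : Measurable ε)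
    (hW : Measurable[mβ.comap Y] W) (hE : MeasurableSet[mβ.comap Y] E) :
    (P.restrict E).map (fun ω => (W ω, ε ω)) = ((P.restrict E).map W).prod (P.map ε) := by
  have hWm : Measurable W := hW.mono hY.comap_le le_rfl
  refine (Measure.prod_eq fun s t hs ht => ?_).symm
  obtain ⟨s', hs', hs'_eq⟩ := hE.inter (hW hs)
  have hWE : W ⁻¹' s ∩ E = Y ⁻¹' s' := by rw [hs'_eq, Set.inter_comm]
  have hWεE : (fun ω => (W ω, ε ω)) ⁻¹' s ×ˢ t ∩ E = Y ⁻¹' s' ∩ ε ⁻¹' t := by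
    rw [Set.mk_preimage_prod, ← hWE, Set.inter_right_comm]
  rw [Measure.map_apply (hWm.prodMk hε) (hs.prod ht), Measure.map_apply hWm hs,
    Measure.map_apply hε ht, Measure.restrict_apply ((hWm.prodMk hε) (hs.prod ht)),
    Measure.restrict_apply (hWm hs), hWεE, hWE, hind.measure_inter_preimage_eq_mul s' t hs' ht]

section ARMA

variable {Ω : Type*} {X e : ℕ → Ω → ℝ} {r s x : ℝ}

def maxLeEvent (X : ℕ → Ω → ℝ) (x : ℝ) (n : ℕ) : Set Ω := {ω | ∀ i, 1 ≤ i → i ≤ n → X i ω ≤ x}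

theorem maxLeEvent_zero : maxLeEvent X x 0 = Set.univ :=
  Set.eq_univ_of_forall fun _ i h1 h0 => absurd (h1.trans h0) (by norm_num)

theorem maxLeEvent_succ (n : ℕ) :
    maxLeEvent X x (n + 1) = maxLeEvent X x n ∩ {ω | X (n + 1) ω ≤ x} := by
  ext ω
  simp only [maxLeEvent, Set.mem_inter_iff, Set.mem_ofPred_eq]
  refine ⟨fun h => ⟨fun i h1 hi => h i h1 (by omega), h _ (by omega) le_rfl⟩,
    fun ⟨h, hn⟩ i h1 hi => ?_⟩
  rcases Nat.lt_or_ge i (n + 1) with hlt | hge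
  · exact h i h1 (by omega)
  · exact (show i = n + 1 by omega) ▸ hn

/-- `(X₀, e₀, …, e_m)`: everything up to time `m` is a function of it. -/
def armaHistory (X e : ℕ → Ω → ℝ) (m : ℕ) (ω : Ω) : ℝ × (Fin (m + 1) → ℝ) :=
  (X 0 ω, fun i => e i ω)

theorem measurable_comap_armaHistory_noise {m i : ℕ} (hi : i ≤ m) :
    Measurable[MeasurableSpace.comap (armaHistory X e m) inferInstance] (e i) :=
  ((measurable_pi_apply (⟨i, by omega⟩ : Fin (m + 1))).comp measurable_snd).comp
    (comap_measurable (armaHistory X e m))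

theorem measurable_comap_armaHistory
    (hX : ∀ i ω, X (i + 1) ω = r * X i ω + e (i + 1) ω + s * e i ω) {m i : ℕ} (hi : i ≤ m) :
    Measurable[MeasurableSpace.comap (armaHistory X e m) inferInstance] (X i) := by
  induction i with
  | zero => exact measurable_fst.comp (comap_measurable _)
  | succ i ih =>
    rw [funext (hX i)]
    exact ((measurable_const.mul (ih (by omega))).add
      (measurable_comap_armaHistory_noise hi)).add
      (measurable_const.mul (measurable_comap_armaHistory_noise (by omega)))

theorem measurableSet_comap_maxLeEvent
    (hX : ∀ i ω, X (i + 1) ω = r * X i ω + e (i + 1) ω + s * e i ω) (m : ℕ) :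
    MeasurableSet[MeasurableSpace.comap (armaHistory X e m) inferInstance] (maxLeEvent X x m) := by
  simp only [maxLeEvent, Set.ofPred_forall]
  exact .iInter fun i => .iInter fun _ => .iInter fun hi =>
    measurableSet_le (measurable_comap_armaHistory hX hi) measurable_const

variable [MeasurableSpace Ω]

theorem measurable_armaHistory (he : ∀ i, Measurable (e i)) (hX₀ : Measurable (X 0)) (m : ℕ) :
    Measurable (armaHistory X e m) :=
  hX₀.prodMk (measurable_pi_lambda _ fun i => he i)

theorem measurable_arma (he : ∀ i, Measurable (e i)) (hX₀ : Measurable (X 0))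
    (hX : ∀ i ω, X (i + 1) ω = r * X i ω + e (i + 1) ω + s * e i ω) (i : ℕ) :
    Measurable (X i) :=
  (measurable_comap_armaHistory hX le_rfl).mono (measurable_armaHistory he hX₀ i).comap_le le_rfl

theorem map_restrict_maxLeEvent_succ {P : Measure Ω} [IsFiniteMeasure P] {μ : Measure ℝ}
    (he : ∀ i, Measurable (e i)) (hX₀ : Measurable (X 0))
    (hX : ∀ i ω, X (i + 1) ω = r * X i ω + e (i + 1) ω + s * e i ω)
    (κ : Kernel (ℝ × ℝ) (ℝ × ℝ))
    (hκ : ∀ z : ℝ × ℝ, ∀ B : Set (ℝ × ℝ), MeasurableSet B →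
        κ z B = μ {t : ℝ | r * z.1 + t + s * z.2 ≤ x ∧ (r * z.1 + t + s * z.2, t) ∈ B})
    (m : ℕ) (hind : IndepFun (armaHistory X e m) (e (m + 1)) P) (hlaw : P.map (e (m + 1)) = μ) :
    (P.restrict (maxLeEvent X x (m + 1))).map (fun ω => (X (m + 1) ω, e (m + 1) ω))
      = ((P.restrict (maxLeEvent X x m)).map (fun ω => (X m ω, e m ω))).bind κ := by
  have : IsFiniteMeasure μ := hlaw ▸ inferInstance
  -- `κ z` is the image of `μ`, restricted to the section of `S` at `z`, under `φ (z, ·)`.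
  set S : Set ((ℝ × ℝ) × ℝ) := {p | r * p.1.1 + p.2 + s * p.1.2 ≤ x}
  set φ : (ℝ × ℝ) × ℝ → ℝ × ℝ := fun p => (r * p.1.1 + p.2 + s * p.1.2, p.2)
  set V : Ω → (ℝ × ℝ) × ℝ := fun ω => ((X m ω, e m ω), e (m + 1) ω)
  have hφ : Measurable φ := by fun_prop
  have hS : MeasurableSet S := measurableSet_le (by fun_prop) measurable_const
  have hXm := measurable_comap_armaHistory hX (le_refl m)
  have hV : Measurable V :=
    ((measurable_arma he hX₀ hX m).prodMk (he m)).prodMk (he (m + 1))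
  have hE := measurableSet_comap_maxLeEvent (x := x) hX m
  rw [Measure.bind_eq_map_restrict_prod _ μ κ hS hφ hκ, ← hlaw,
    ← hind.map_restrict_prodMk_eq_prod (measurable_armaHistory he hX₀ m)
      (he (m + 1)) (hXm.prodMk (measurable_comap_armaHistory_noise le_rfl)) hE,
    Measure.restrict_map hV hS, Measure.map_map hφ hV, Measure.restrict_restrict (hV hS),
    maxLeEvent_succ]
  have hφV : φ ∘ V = fun ω => (X (m + 1) ω, e (m + 1) ω) := funext fun ω => by
    simp only [φ, V, Function.comp_apply, hX]
  have hVS : V ⁻¹' S = {ω | X (m + 1) ω ≤ x} := by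
    ext ω
    simp only [S, V, Set.mem_preimage, Set.mem_ofPred_eq, hX]
  rw [hφV, hVS, Set.inter_comm]

theorem iterate_bind_eq_map_restrict_maxLeEvent {P : Measure Ω} [IsFiniteMeasure P]
    {μ : Measure ℝ} (he : ∀ i, Measurable (e i)) (hX₀ : Measurable (X 0))
    (hX : ∀ i ω, X (i + 1) ω = r * X i ω + e (i + 1) ω + s * e i ω)
    (κ : Kernel (ℝ × ℝ) (ℝ × ℝ))
    (hκ : ∀ z : ℝ × ℝ, ∀ B : Set (ℝ × ℝ), MeasurableSet B →
        κ z B = μ {t : ℝ | r * z.1 + t + s * z.2 ≤ x ∧ (r * z.1 + t + s * z.2, t) ∈ B})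
    (hind : ∀ m, IndepFun (armaHistory X e m) (e (m + 1)) P)
    (hlaw : ∀ m, P.map (e (m + 1)) = μ) (n : ℕ) :
    (fun ν : Measure (ℝ × ℝ) => ν.bind (fun z => κ z))^[n] (P.map fun ω => (X 0 ω, e 0 ω))
      = (P.restrict (maxLeEvent X x n)).map (fun ω => (X n ω, e n ω)) := by
  induction n with
  | zero => rw [Function.iterate_zero_apply, maxLeEvent_zero, Measure.restrict_univ]
  | succ n ih =>
    rw [Function.iterate_succ_apply', ih,
      map_restrict_maxLeEvent_succ he hX₀ hX κ hκ n (hind n) (hlaw n)]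

end ARMA

theorem arma11_max_cdf_iterated_kernel_general
    {Ω : Type*} [MeasureSpace Ω] [IsProbabilityMeasure (ℙ : Measure Ω)]
    (e X : ℕ → Ω → ℝ) (μ : Measure ℝ)
    (he_meas : ∀ i, Measurable (e i)) (hX0_meas : Measurable (X 0))
    (hlaw : ∀ i, Measure.map (e i) ℙ = μ)
    (hindep : ∀ n, 1 ≤ n → ProbabilityTheory.IndepFun
        (fun ω => (X 0 ω, fun i : Fin n => e i ω)) (e n) ℙ)
    (r s x : ℝ)
    (hX : ∀ i, 1 ≤ i → ∀ ω, X i ω = r * X (i - 1) ω + e i ω + s * e (i - 1) ω)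
    (κ : ProbabilityTheory.Kernel (ℝ × ℝ) (ℝ × ℝ))
    (hκ : ∀ z : ℝ × ℝ, ∀ B : Set (ℝ × ℝ), MeasurableSet B →
        κ z B = μ {t : ℝ | r * z.1 + t + s * z.2 ≤ x ∧ (r * z.1 + t + s * z.2, t) ∈ B})
    (n : ℕ) :
    ℙ {ω | ∀ i, 1 ≤ i → i ≤ n → X i ω ≤ x}
      = (fun m : Measure (ℝ × ℝ) => m.bind (fun z => κ z))^[n]
          (Measure.map (fun ω => (X 0 ω, e 0 ω)) ℙ) Set.univ := by
  have hrec : ∀ i ω, X (i + 1) ω = r * X i ω + e (i + 1) ω + s * e i ω := fun i ω => by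
    simpa using hX (i + 1) (Nat.le_add_left 1 i) ω
  rw [iterate_bind_eq_map_restrict_maxLeEvent he_meas hX0_meas hrec κ hκ
    (fun m => hindep (m + 1) m.succ_pos) (fun m => hlaw (m + 1)) n,
    Measure.map_apply ((measurable_arma he_meas hX0_meas hrec n).prodMk (he_meas n)) .univ,
    Set.preimage_univ, Measure.restrict_apply_univ, maxLeEvent]

/-- Theorem 2.2: for the ARMA(1,1) process
`X_i = r·X_{i−1} + e_i + s·e_{i−1}` with i.i.d. errors `e_i ~ μ`, `r > 0`,
and `M_n = max_{1≤i≤n} X_i`, the cdf of the maximum at `x` equals the total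
mass of the `n`-fold iterate of the sub-Markov kernel
`κ(z₀,z₁)(B) = μ{t : r·z₀+t+s·z₁ ≤ x ∧ (r·z₀+t+s·z₁, t) ∈ B}` applied (by
`Measure.bind`) to the initial law `ν₀` of `(X₀, e₀)`. -/
theorem arma11_max_cdf_iterated_kernel
    {Ω : Type*} [MeasureSpace Ω] [IsProbabilityMeasure (ℙ : Measure Ω)]
    (e X : ℕ → Ω → ℝ) (μ : Measure ℝ)
    (he_meas : ∀ i, Measurable (e i)) (hX0_meas : Measurable (X 0))
    (hiid : ProbabilityTheory.iIndepFun e ℙ)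
    (hlaw : ∀ i, Measure.map (e i) ℙ = μ)
    (hindep : ∀ n, 1 ≤ n → ProbabilityTheory.IndepFun
        (fun ω => (X 0 ω, fun i : Fin n => e i ω)) (e n) ℙ)
    (r s x : ℝ) (hr : 0 < r)
    (hX : ∀ i, 1 ≤ i → ∀ ω, X i ω = r * X (i - 1) ω + e i ω + s * e (i - 1) ω)
    (κ : ProbabilityTheory.Kernel (ℝ × ℝ) (ℝ × ℝ))
    (hκ : ∀ z : ℝ × ℝ, ∀ B : Set (ℝ × ℝ), MeasurableSet B →
        κ z B = μ {t : ℝ | r * z.1 + t + s * z.2 ≤ x ∧ (r * z.1 + t + s * z.2, t) ∈ B})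
    (n : ℕ) (hn : 1 ≤ n) :
    ℙ {ω | ∀ i, 1 ≤ i → i ≤ n → X i ω ≤ x}
      = (fun m : Measure (ℝ × ℝ) => m.bind (fun z => κ z))^[n]
          (Measure.map (fun ω => (X 0 ω, e 0 ω)) ℙ) Set.univ :=
  arma11_max_cdf_iterated_kernel_general e X μ he_meas hX0_meas hlaw hindep r s x hX κ hκ n
end

section
/- Let (e_i)_{i≥0} be i.i.d. real-valued random variables whose common law is absolutely continuous with density f, let X₀ be a real-valued random variable such that for every n ≥ 1 the variable e_n is independent of (X₀, e₀, …, e_{n−1}), fix real numbers r > 0 and s, and define X_i = r·X_{i−1} + e_i + s·e_{i−1} for i ≥ 1; set M_n = max_{1≤i≤n} X_i and fix x ∈ ℝ. Then for every n ≥ 1 and all y₀, y₁ ∈ ℝ: P(M_n ≤ x, X_n ≤ y₀, e_n ≤ y₁) = ∫_{−∞}^{y₁} f(t) · P(M_{n−1} ≤ x, X_{n−1} ≤ (min(y₀, x) − s·e_{n−1} − t)/r) dt, where for n = 1 the condition 'M₀ ≤ x' is interpreted as vacuously true. -/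
/-!
Since `r > 0`, the event `{M_n ≤ x, X_n ≤ y₀}` coincides pathwise with
`{M_{n-1} ≤ x, X_{n-1} ≤ (min y₀ x - s e_{n-1} - e_n) / r}`. This is `{(e_n, W) ∈ S}` for
`W = (X_0, …, X_{n-1}, e_{n-1})`, a measurable function of `(X_0, e_0, …, e_{n-1})` and hence
independent of `e_n`. So the joint law of `(e_n, W)` is the product of `f · volume` with the law
of `W`, and Tonelli's theorem integrates the sections of `S` against the density `f`.
-/

open MeasureTheory ProbabilityTheory Set

section
variable {Ω β : Type*} [MeasurableSpace Ω] [MeasurableSpace β] {μ : Measure Ω}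

theorem ProbabilityTheory.IndepFun.of_measurable_comap_right {γ δ : Type*} [MeasurableSpace γ]
    [MeasurableSpace δ] {Y : Ω → γ} {V : Ω → β} {W : Ω → δ} (h : IndepFun Y V μ)
    (hW : Measurable[MeasurableSpace.comap V inferInstance] W) : IndepFun Y W μ :=
  indep_of_indep_of_le_right h hW.comap_le

variable [IsFiniteMeasure μ] {Y : Ω → ℝ} {V : Ω → β} {f : ℝ → ℝ} {S : Set (ℝ × β)}

theorem measurable_measure_setOf_prodMk_mem (hV : Measurable V) (hS : MeasurableSet S) :
    Measurable fun t => μ {ω | (t, V ω) ∈ S} := by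
  convert measurable_measure_prodMk_left (ν := μ.map V) hS using 2 with t
  exact (Measure.map_apply hV (measurable_prodMk_left hS)).symm

theorem measure_mem_prodMk_eq_setLIntegral_density (hY : Measurable Y) (hV : Measurable V)
    (hind : IndepFun Y V μ) (hf : Measurable f)
    (hlaw : μ.map Y = volume.withDensity (fun t => ENNReal.ofReal (f t)))
    {A : Set ℝ} (hA : MeasurableSet A) (hS : MeasurableSet S) :
    μ {ω | Y ω ∈ A ∧ (Y ω, V ω) ∈ S}
      = ∫⁻ t in A, ENNReal.ofReal (f t) * μ {ω | (t, V ω) ∈ S} := by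
  have hAS : MeasurableSet (Prod.fst ⁻¹' A ∩ S) := (measurable_fst hA).inter hS
  calc μ {ω | Y ω ∈ A ∧ (Y ω, V ω) ∈ S}
      = μ.map (fun ω => (Y ω, V ω)) (Prod.fst ⁻¹' A ∩ S) := by
        rw [Measure.map_apply (hY.prodMk hV) hAS]; rfl
    _ = ((μ.map Y).restrict A).prod (μ.map V) S := by
        rw [(indepFun_iff_map_prod_eq_prod_map_map hY.aemeasurable hV.aemeasurable).1 hind,
          Measure.restrict_prod_eq_prod_univ, prod_univ, Measure.restrict_apply hS, inter_comm]
    _ = ∫⁻ t in A, ENNReal.ofReal (f t) * μ {ω | (t, V ω) ∈ S} := by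
        simp only [Measure.prod_apply hS, Measure.map_apply hV (measurable_prodMk_left hS)]
        rw [hlaw, restrict_withDensity hA]
        exact lintegral_withDensity_eq_lintegral_mul _ hf.ennreal_ofReal
          (measurable_measure_setOf_prodMk_mem hV hS)

theorem measure_mem_prodMk_toReal_eq_setIntegral_density (hY : Measurable Y)
    (hV : Measurable V) (hind : IndepFun Y V μ) (hf : Measurable f) (hf_nonneg : ∀ t, 0 ≤ f t)
    (hlaw : μ.map Y = volume.withDensity (fun t => ENNReal.ofReal (f t)))
    {A : Set ℝ} (hA : MeasurableSet A) (hS : MeasurableSet S) :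
    (μ {ω | Y ω ∈ A ∧ (Y ω, V ω) ∈ S}).toReal
      = ∫ t in A, f t * (μ {ω | (t, V ω) ∈ S}).toReal := by
  have hfin : ∀ t, ENNReal.ofReal (f t) * μ {ω | (t, V ω) ∈ S} < ⊤ := fun t =>
    ENNReal.mul_lt_top ENNReal.ofReal_lt_top (measure_lt_top _ _)
  rw [measure_mem_prodMk_eq_setLIntegral_density hY hV hind hf hlaw hA hS,
    ← integral_toReal (f := fun t => ENNReal.ofReal (f t) * μ {ω | (t, V ω) ∈ S})
      (hf.ennreal_ofReal.mul (measurable_measure_setOf_prodMk_mem hV hS)).aemeasurable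
      (.of_forall hfin)]
  simp only [ENNReal.toReal_mul, ENNReal.toReal_ofReal (hf_nonneg _)]

end

theorem forall_fin_one_le_iff {n : ℕ} {P : ℕ → Prop} :
    (∀ i : Fin n, 1 ≤ (i : ℕ) → P i) ↔ ∀ i, 1 ≤ i → i ≤ n - 1 → P i := by
  rw [Fin.forall_iff]
  exact forall_congr' fun i => ⟨fun h h1 hi => h (by omega) h1, fun h hi h1 => h h1 (by omega)⟩

theorem forall_le_and_le_iff_forall_le_pred_and_le_min {a : ℕ → ℝ} {n : ℕ} (hn : 1 ≤ n)
    (x y : ℝ) :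
    ((∀ i, 1 ≤ i → i ≤ n → a i ≤ x) ∧ a n ≤ y)
      ↔ (∀ i, 1 ≤ i → i ≤ n - 1 → a i ≤ x) ∧ a n ≤ min y x := by
  constructor
  · rintro ⟨hle, hy⟩
    exact ⟨fun i hi1 hi => hle i hi1 (by omega), le_min hy (hle n hn le_rfl)⟩
  · rintro ⟨hle, hmin⟩
    refine ⟨fun i hi1 hi => ?_, hmin.trans (min_le_left _ _)⟩
    rcases (show i ≤ n - 1 ∨ i = n by omega) with hi' | rfl
    · exact hle i hi1 hi'
    · exact hmin.trans (min_le_right _ _)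

section Arma
variable {Ω : Type*} {e X : ℕ → Ω → ℝ} {r s : ℝ}

theorem arma_forall_le_and_le_iff
    (hX : ∀ i, 1 ≤ i → ∀ ω, X i ω = r * X (i - 1) ω + e i ω + s * e (i - 1) ω) (hr : 0 < r) {n : ℕ} (hn : 1 ≤ n) (x y₀ : ℝ) (ω : Ω) :
    ((∀ i, 1 ≤ i → i ≤ n → X i ω ≤ x) ∧ X n ω ≤ y₀)
      ↔ (∀ i, 1 ≤ i → i ≤ n - 1 → X i ω ≤ x) ∧
          X (n - 1) ω ≤ (min y₀ x - s * e (n - 1) ω - e n ω) / r := by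
  rw [forall_le_and_le_iff_forall_le_pred_and_le_min hn, hX n hn ω, le_div_iff₀ hr]
  exact and_congr_right fun _ => ⟨fun h => by linarith, fun h => by linarith⟩

theorem measurable_arma_pi {m : MeasurableSpace Ω}
    (hX : ∀ i, 1 ≤ i → ∀ ω, X i ω = r * X (i - 1) ω + e i ω + s * e (i - 1) ω) {n : ℕ} (hX0 : Measurable (X 0))
    (he : ∀ i < n, Measurable (e i)) : Measurable fun ω (i : Fin n) => X i ω := by
  have hXk : ∀ k < n, Measurable (X k) := by
    intro k hk
    induction k with
    | zero => exact hX0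
    | succ k ih =>
      rw [show X (k + 1) = fun ω => r * X k ω + e (k + 1) ω + s * e k ω from
        funext (hX (k + 1) k.succ_pos)]
      exact (((ih (by omega)).const_mul r).add (he _ hk)).add ((he k (by omega)).const_mul s)
  exact measurable_pi_lambda _ fun i => hXk i i.2

end Arma

theorem arma11_recurrence_density_general
    {Ω : Type*} [MeasureSpace Ω] [IsProbabilityMeasure (ℙ : Measure Ω)]
    (e X : ℕ → Ω → ℝ) (f : ℝ → ℝ)
    (hf_meas : Measurable f) (hf_nonneg : ∀ t, 0 ≤ f t)
    (he_meas : ∀ i, Measurable (e i)) (hX0_meas : Measurable (X 0))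
    (hlaw : ∀ i, Measure.map (e i) ℙ
        = volume.withDensity (fun t => ENNReal.ofReal (f t)))
    (hindep : ∀ n, 1 ≤ n → ProbabilityTheory.IndepFun
        (fun ω => (X 0 ω, fun i : Fin n => e i ω)) (e n) ℙ)
    (r s x : ℝ) (hr : 0 < r)
    (hX : ∀ i, 1 ≤ i → ∀ ω, X i ω = r * X (i - 1) ω + e i ω + s * e (i - 1) ω)
    (n : ℕ) (hn : 1 ≤ n) (y₀ y₁ : ℝ) :
    (ℙ {ω | (∀ i, 1 ≤ i → i ≤ n → X i ω ≤ x) ∧ X n ω ≤ y₀ ∧ e n ω ≤ y₁}).toReal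
      = ∫ t in Set.Iic y₁, f t *
          (ℙ {ω | (∀ i, 1 ≤ i → i ≤ n - 1 → X i ω ≤ x) ∧
              X (n - 1) ω ≤ (min y₀ x - s * e (n - 1) ω - t) / r}).toReal := by
  have hn1 : n - 1 < n := by omega
  set V : Ω → ℝ × (Fin n → ℝ) := fun ω => (X 0 ω, fun i : Fin n => e i ω)
  set W : Ω → (Fin n → ℝ) × ℝ := fun ω => (fun i : Fin n => X i ω, e (n - 1) ω)
  have hV : Measurable V := hX0_meas.prodMk (measurable_pi_lambda _ fun i => he_meas i)
  have hW : Measurable[MeasurableSpace.comap V inferInstance] W := by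
    have he : ∀ i < n, Measurable[MeasurableSpace.comap V inferInstance] (e i) := fun i hi =>
      ((measurable_pi_apply (⟨i, hi⟩ : Fin n)).comp measurable_snd).comp (comap_measurable V)
    exact (measurable_arma_pi hX (measurable_fst.comp (comap_measurable V)) he).prodMk
      (he _ hn1)
  set S : Set (ℝ × ((Fin n → ℝ) × ℝ)) := {p | (∀ i : Fin n, 1 ≤ (i : ℕ) → p.2.1 i ≤ x) ∧
    p.2.1 ⟨n - 1, hn1⟩ ≤ (min y₀ x - s * p.2.2 - p.1) / r}
  have hS : MeasurableSet S := by measurability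
  have hlhs : {ω | (∀ i, 1 ≤ i → i ≤ n → X i ω ≤ x) ∧ X n ω ≤ y₀ ∧ e n ω ≤ y₁}
      = {ω | e n ω ∈ Iic y₁ ∧ (e n ω, W ω) ∈ S} := by
    ext ω
    rw [mem_ofPred_eq, ← and_assoc, arma_forall_le_and_le_iff hX hr hn]
    simp only [mem_ofPred_eq, mem_Iic, S, W, forall_fin_one_le_iff (P := fun i => X i ω ≤ x)]
    exact and_comm
  have hrhs : ∀ t, {ω | (∀ i, 1 ≤ i → i ≤ n - 1 → X i ω ≤ x) ∧
      X (n - 1) ω ≤ (min y₀ x - s * e (n - 1) ω - t) / r} = {ω | (t, W ω) ∈ S} := fun t => by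
    ext ω
    simp only [mem_ofPred_eq, S, W, forall_fin_one_le_iff (P := fun i => X i ω ≤ x)]
  rw [hlhs, measure_mem_prodMk_toReal_eq_setIntegral_density (he_meas n)
    (hW.mono hV.comap_le le_rfl) ((hindep n hn).symm.of_measurable_comap_right hW) hf_meas
    hf_nonneg (hlaw n) measurableSet_Iic hS]
  simp only [hrhs]

/-- absolutely continuous form of the recurrence of Theorem 2.1:
for the ARMA(1,1) process `X_i = r·X_{i−1} + e_i + s·e_{i−1}` with i.i.d.
errors having density `f`, `r > 0`, and `M_n = max_{1≤i≤n} X_i` (`M₀ = −∞`),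
`P(M_n ≤ x, X_n ≤ y₀, e_n ≤ y₁)
  = ∫_{−∞}^{y₁} f(t)·P(M_{n−1} ≤ x, X_{n−1} ≤ (min(y₀,x) − s·e_{n−1} − t)/r) dt`. -/
theorem arma11_recurrence_density
    {Ω : Type*} [MeasureSpace Ω] [IsProbabilityMeasure (ℙ : Measure Ω)]
    (e X : ℕ → Ω → ℝ) (f : ℝ → ℝ)
    (hf_meas : Measurable f) (hf_nonneg : ∀ t, 0 ≤ f t)
    (he_meas : ∀ i, Measurable (e i)) (hX0_meas : Measurable (X 0))
    (hiid : ProbabilityTheory.iIndepFun e ℙ)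
    (hlaw : ∀ i, Measure.map (e i) ℙ
        = volume.withDensity (fun t => ENNReal.ofReal (f t)))
    (hindep : ∀ n, 1 ≤ n → ProbabilityTheory.IndepFun
        (fun ω => (X 0 ω, fun i : Fin n => e i ω)) (e n) ℙ)
    (r s x : ℝ) (hr : 0 < r)
    (hX : ∀ i, 1 ≤ i → ∀ ω, X i ω = r * X (i - 1) ω + e i ω + s * e (i - 1) ω)
    (n : ℕ) (hn : 1 ≤ n) (y₀ y₁ : ℝ) :
    (ℙ {ω | (∀ i, 1 ≤ i → i ≤ n → X i ω ≤ x) ∧ X n ω ≤ y₀ ∧ e n ω ≤ y₁}).toReal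
      = ∫ t in Set.Iic y₁, f t *
          (ℙ {ω | (∀ i, 1 ≤ i → i ≤ n - 1 → X i ω ≤ x) ∧
              X (n - 1) ω ≤ (min y₀ x - s * e (n - 1) ω - t) / r}).toReal :=
  arma11_recurrence_density_general e X f hf_meas hf_nonneg he_meas hX0_meas hlaw hindep r s x hr hX
    n hn y₀ y₁
end

section
/- Fix real numbers r > 0, s > 0, x, y₀, y₁, and write y_{0x} = min(y₀, x) and γ(z₀) = (y_{0x} − y₁ − r·z₀)/s. Let f : ℝ → ℝ be continuously differentiable and let h : ℝ² → ℝ have a continuous partial derivative ∂₂h in its second variable, with h(z₀, z₁) → 0 as z₁ → +∞ for every z₀ ∈ ℝ. Assume that for every z₀ the functions z₁ ↦ f(y_{0x} − r·z₀ − s·z₁)·∂₂h(z₀, z₁) and z₁ ↦ f′(y_{0x} − r·z₀ − s·z₁)·h(z₀, z₁) are integrable on (γ(z₀), ∞), and that the three functions of z₀ given by the corresponding inner integrals and by z₀ ↦ h(z₀, γ(z₀)) are integrable on ℝ. Then: r·∫_ℝ ∫_{γ(z₀)}^{∞} f(y_{0x} − r·z₀ − s·z₁)·∂₂h(z₀,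 z₁) dz₁ dz₀ = −r·f(y₁)·∫_ℝ h(z₀, γ(z₀)) dz₀ + r·s·∫_ℝ ∫_{γ(z₀)}^{∞} f′(y_{0x} − r·z₀ − s·z₁)·h(z₀, z₁) dz₁ dz₀. -/
open MeasureTheory Filter Set Topology

/-! For fixed `z₀` the identity is integration by parts on `(γ(z₀), ∞)` with
`u = f (y₀ₓ - r z₀ - s ·)` and `v = h z₀`, whose boundary value at `γ(z₀)` is `f y₁ * h z₀ γ(z₀)`;
integrating the fibrewise identities in `z₀` gives the claim.
The boundary term at infinity vanishes even though `u` may be unbounded: `u v` has an integrable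
derivative, hence a limit `L`. If `L ≠ 0`, then where `|u v| > |L| / 2` the logarithmic derivative
`u' / u = u' v / (u v)` is dominated by a multiple of the integrable `u' v`, so `log |u|` converges,
`u` is bounded and `u v → 0`, a contradiction. -/

theorem isBoundedUnder_norm_of_integrableOn_deriv_div {F F' : ℝ → ℝ} {a : ℝ}
    (hF : ∀ x ∈ Ioi a, HasDerivAt F (F' x) x) (hF_ne : ∀ x ∈ Ioi a, F x ≠ 0)
    (hint : IntegrableOn (fun x => F' x / F x) (Ioi a)) :
    IsBoundedUnder (· ≤ ·) atTop ((‖·‖) ∘ F) := by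
  have hlog := tendsto_limUnder_of_hasDerivAt_of_integrableOn_Ioi
    (fun x hx => (hF x hx).log (hF_ne x hx)) hint
  have hexp := (Real.continuous_exp.tendsto _).comp hlog
  refine (hexp.congr' ?_).isBoundedUnder_le
  filter_upwards [Ioi_mem_atTop a] with x hx
  simp [Real.exp_log_eq_abs (hF_ne x hx)]

theorem tendsto_mul_atTop_zero_of_integrableOn {u u' v v' : ℝ → ℝ} {a : ℝ}
    (hu : ∀ x ∈ Ioi a, HasDerivAt u (u' x) x) (hv : ∀ x ∈ Ioi a, HasDerivAt v (v' x) x)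
    (huv' : IntegrableOn (u * v') (Ioi a)) (hu'v : IntegrableOn (u' * v) (Ioi a))
    (hv_lim : Tendsto v atTop (𝓝 0)) :
    Tendsto (u * v) atTop (𝓝 0) := by
  have hlim := tendsto_limUnder_of_hasDerivAt_of_integrableOn_Ioi
    (fun x hx => (hu x hx).mul (hv x hx)) (hu'v.add huv')
  set L := limUnder atTop (u * v)
  suffices hL : L = 0 by rwa [hL] at hlim
  by_contra hL
  have hL2 : |L| / 2 < |L| := half_lt_self (abs_pos.mpr hL)
  obtain ⟨b, hb⟩ := eventually_atTop.1
    ((hlim.abs.eventually_const_lt hL2).and (eventually_gt_atTop a))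
  have huv_ne : ∀ x ∈ Ioi b, u x * v x ≠ 0 := fun x hx h0 => by
    have := (hb x (le_of_lt hx)).1
    simp only [Pi.mul_apply, h0, abs_zero] at this
    linarith [abs_nonneg L]
  have hab : Ioi b ⊆ Ioi a := fun x hx => (hb b le_rfl).2.trans hx
  have hdiv : IntegrableOn (fun x => u' x / u x) (Ioi b) := by
    have hq : IntegrableOn (fun x => u' x * v x / (u x * v x)) (Ioi b) := by
      refine Integrable.mono' ((hu'v.mono_set hab).norm.const_mul (2 / |L|)) ?_ ?_
      · have hcont : ContinuousOn (u * v) (Ioi b) := fun x hx =>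
          ((hu x (hab hx)).continuousAt.mul (hv x (hab hx)).continuousAt).continuousWithinAt
        exact ((hu'v.mono_set hab).aestronglyMeasurable.aemeasurable.div
          (hcont.aestronglyMeasurable measurableSet_Ioi).aemeasurable).aestronglyMeasurable
      · refine (ae_restrict_iff' measurableSet_Ioi).2 (Eventually.of_forall fun x hx => ?_)
        have hgt := (hb x (le_of_lt hx)).1
        simp only [Pi.mul_apply] at hgt
        rw [Real.norm_eq_abs, abs_div, div_le_iff₀ (abs_pos.mpr (huv_ne x hx))]
        calc |u' x * v x| = 2 / |L| * ‖u' x * v x‖ * (|L| / 2) := by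
              rw [Real.norm_eq_abs]; field_simp
          _ ≤ 2 / |L| * ‖u' x * v x‖ * |u x * v x| := by gcongr
    refine IntegrableOn.congr_fun hq (fun x hx => ?_) measurableSet_Ioi
    have hx' := huv_ne x hx
    field_simp [left_ne_zero_of_mul hx', right_ne_zero_of_mul hx']
  have hbdd := isBoundedUnder_norm_of_integrableOn_deriv_div (fun x hx => hu x (hab hx))
    (fun x hx => left_ne_zero_of_mul (huv_ne x hx)) hdiv
  have hzero : Tendsto (u * v) atTop (𝓝 0) := by
    simpa only [Pi.mul_def, mul_comm] using hv_lim.zero_mul_isBoundedUnder_le hbdd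
  exact hL (tendsto_nhds_unique hlim hzero)

theorem integral_Ioi_mul_deriv_eq_neg_sub {u u' v v' : ℝ → ℝ} {a : ℝ}
    (hu : ∀ x ∈ Ici a, HasDerivAt u (u' x) x) (hv : ∀ x ∈ Ici a, HasDerivAt v (v' x) x)
    (huv' : IntegrableOn (u * v') (Ioi a)) (hu'v : IntegrableOn (u' * v) (Ioi a))
    (hv_lim : Tendsto v atTop (𝓝 0)) :
    ∫ x in Ioi a, u x * v' x = -(u a * v a) - ∫ x in Ioi a, u' x * v x := by
  have hu' : ∀ x ∈ Ioi a, HasDerivAt u (u' x) x := fun x hx => hu x (Ioi_subset_Ici_self hx)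
  have hv' : ∀ x ∈ Ioi a, HasDerivAt v (v' x) x := fun x hx => hv x (Ioi_subset_Ici_self hx)
  have h_zero : Tendsto (u * v) (𝓝[>] a) (𝓝 (u a * v a)) :=
    ((hu a self_mem_Ici).continuousAt.mul (hv a self_mem_Ici).continuousAt).continuousWithinAt
  rw [integral_Ioi_mul_deriv_eq_deriv_mul hu' hv' huv' hu'v h_zero
    (tendsto_mul_atTop_zero_of_integrableOn hu' hv' huv' hu'v hv_lim), zero_sub]

theorem integral_Ioi_comp_sub_mul_mul_deriv {f : ℝ → ℝ} (hf : Differentiable ℝ f)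
    {v v' : ℝ → ℝ} {c s a : ℝ} (hv : ∀ x, HasDerivAt v (v' x) x)
    (hv_lim : Tendsto v atTop (𝓝 0))
    (hint : IntegrableOn (fun x => f (c - s * x) * v' x) (Ioi a))
    (hint' : IntegrableOn (fun x => deriv f (c - s * x) * v x) (Ioi a)) :
    ∫ x in Ioi a, f (c - s * x) * v' x
      = -(f (c - s * a) * v a) + s * ∫ x in Ioi a, deriv f (c - s * x) * v x := by
  have hu : ∀ x, HasDerivAt (fun t => f (c - s * t)) (deriv f (c - s * x) * -s) x := fun x => by
    simpa [Function.comp_def] using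
      (hf (c - s * x)).hasDerivAt.comp x (((hasDerivAt_id x).const_mul s).const_sub c)
  have hu'v : IntegrableOn (fun x => deriv f (c - s * x) * -s * v x) (Ioi a) :=
    IntegrableOn.congr_fun (hint'.const_mul (-s)) (fun x _ => by ring) measurableSet_Ioi
  rw [integral_Ioi_mul_deriv_eq_neg_sub (fun x _ => hu x) (fun x _ => hv x) hint hu'v hv_lim]
  simp only [mul_assoc, mul_left_comm _ (-s), integral_const_mul]
  ring

theorem arma11_kernel_integration_by_parts_general
    (r s x y₀ y₁ : ℝ) (hs : 0 < s)
    (f : ℝ → ℝ) (hf : ContDiff ℝ 1 f)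
    (h h₂ : ℝ → ℝ → ℝ)
    (hh₂ : ∀ z₀ z₁ : ℝ, HasDerivAt (h z₀) (h₂ z₀ z₁) z₁)
    (hh_lim : ∀ z₀ : ℝ, Tendsto (h z₀) atTop (nhds 0))
    (hint1 : ∀ z₀ : ℝ, IntegrableOn
      (fun z₁ => f (min y₀ x - r * z₀ - s * z₁) * h₂ z₀ z₁)
      (Set.Ioi ((min y₀ x - y₁ - r * z₀) / s)))
    (hint2 : ∀ z₀ : ℝ, IntegrableOn
      (fun z₁ => deriv f (min y₀ x - r * z₀ - s * z₁) * h z₀ z₁)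
      (Set.Ioi ((min y₀ x - y₁ - r * z₀) / s)))
    (hint4 : Integrable (fun z₀ =>
      ∫ z₁ in Set.Ioi ((min y₀ x - y₁ - r * z₀) / s),
        deriv f (min y₀ x - r * z₀ - s * z₁) * h z₀ z₁))
    (hint5 : Integrable (fun z₀ => h z₀ ((min y₀ x - y₁ - r * z₀) / s))) :
    r * ∫ z₀ : ℝ, ∫ z₁ in Set.Ioi ((min y₀ x - y₁ - r * z₀) / s),
        f (min y₀ x - r * z₀ - s * z₁) * h₂ z₀ z₁
      = -r * f y₁ * (∫ z₀ : ℝ, h z₀ ((min y₀ x - y₁ - r * z₀) / s))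
        + r * s * ∫ z₀ : ℝ, ∫ z₁ in Set.Ioi ((min y₀ x - y₁ - r * z₀) / s),
            deriv f (min y₀ x - r * z₀ - s * z₁) * h z₀ z₁ := by
  have hfibre : ∀ z₀ : ℝ,
      ∫ z₁ in Set.Ioi ((min y₀ x - y₁ - r * z₀) / s), f (min y₀ x - r * z₀ - s * z₁) * h₂ z₀ z₁
        = -(f y₁ * h z₀ ((min y₀ x - y₁ - r * z₀) / s))
          + s * ∫ z₁ in Set.Ioi ((min y₀ x - y₁ - r * z₀) / s),
              deriv f (min y₀ x - r * z₀ - s * z₁) * h z₀ z₁ := fun z₀ => by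
    have hγ : min y₀ x - r * z₀ - s * ((min y₀ x - y₁ - r * z₀) / s) = y₁ := by
      field_simp; ring
    simpa only [hγ] using integral_Ioi_comp_sub_mul_mul_deriv (hf.differentiable one_ne_zero)
      (hh₂ z₀) (hh_lim z₀) (hint1 z₀) (hint2 z₀)
  rw [integral_congr_ae (Eventually.of_forall hfibre),
    integral_add (hint5.const_mul (f y₁)).fun_neg (hint4.const_mul s), integral_neg,
    integral_const_mul, integral_const_mul]
  ring

/-- delta-function-free form of Theorem 3.1: integrating by parts
in `z₁`, the operator
`𝒦h(y) = r·∫∫_{z₁ > γ(z₀)} f(y₀ₓ − r·z₀ − s·z₁)·∂₂h(z₀,z₁) dz₁ dz₀`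
(with `y₀ₓ = min(y₀,x)` and `γ(z₀) = (y₀ₓ − y₁ − r·z₀)/s`) decomposes into a
boundary term supported on the line `z₁ = γ(z₀)` and an absolutely continuous
term involving `f′`. -/
theorem arma11_kernel_integration_by_parts
    (r s x y₀ y₁ : ℝ) (hr : 0 < r) (hs : 0 < s)
    (f : ℝ → ℝ) (hf : ContDiff ℝ 1 f)
    (h h₂ : ℝ → ℝ → ℝ)
    (hh₂ : ∀ z₀ z₁ : ℝ, HasDerivAt (h z₀) (h₂ z₀ z₁) z₁)
    (hh₂_cont : Continuous (fun p : ℝ × ℝ => h₂ p.1 p.2))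
    (hh_lim : ∀ z₀ : ℝ, Tendsto (h z₀) atTop (nhds 0))
    (hint1 : ∀ z₀ : ℝ, IntegrableOn
      (fun z₁ => f (min y₀ x - r * z₀ - s * z₁) * h₂ z₀ z₁)
      (Set.Ioi ((min y₀ x - y₁ - r * z₀) / s)))
    (hint2 : ∀ z₀ : ℝ, IntegrableOn
      (fun z₁ => deriv f (min y₀ x - r * z₀ - s * z₁) * h z₀ z₁)
      (Set.Ioi ((min y₀ x - y₁ - r * z₀) / s)))
    (hint3 : Integrable (fun z₀ =>
      ∫ z₁ in Set.Ioi ((min y₀ x - y₁ - r * z₀) / s),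
        f (min y₀ x - r * z₀ - s * z₁) * h₂ z₀ z₁))
    (hint4 : Integrable (fun z₀ =>
      ∫ z₁ in Set.Ioi ((min y₀ x - y₁ - r * z₀) / s),
        deriv f (min y₀ x - r * z₀ - s * z₁) * h z₀ z₁))
    (hint5 : Integrable (fun z₀ => h z₀ ((min y₀ x - y₁ - r * z₀) / s))) :
    r * ∫ z₀ : ℝ, ∫ z₁ in Set.Ioi ((min y₀ x - y₁ - r * z₀) / s),
        f (min y₀ x - r * z₀ - s * z₁) * h₂ z₀ z₁
      = -r * f y₁ * (∫ z₀ : ℝ, h z₀ ((min y₀ x - y₁ - r * z₀) / s))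
        + r * s * ∫ z₀ : ℝ, ∫ z₁ in Set.Ioi ((min y₀ x - y₁ - r * z₀) / s),
            deriv f (min y₀ x - r * z₀ - s * z₁) * h z₀ z₁ :=
  arma11_kernel_integration_by_parts_general r s x y₀ y₁ hs f hf h h₂ hh₂ hh_lim hint1 hint2 hint4
    hint5
end

section
/- Let f : ℝ → [0, ∞) be a measurable function with ∫_ℝ f = 1 (a probability density), and fix real numbers r > 0, 0 ≤ s < 1, and x. For x < y₀ < z₀ define y₁* = (x − r·z₀ − s·(x − r·y₀))/(1 − s²) and z₁* = (x − r·y₀ − s·(x − r·z₀))/(1 − s²). Then ∫∫_{x < y₀ < z₀} f(y₁*)·f(z₁*) dy₀ dz₀ ≤ (1 − s²)/r². -/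
open MeasureTheory

/-!
Up to the translation by `(x / (1 + s), x / (1 + s))`, the map `(y₀, z₀) ↦ (y₁*, z₁*)` is linear
with determinant `-r² / (1 - s²)`. Enlarging the region of integration to the whole plane and
changing variables turns the integral into `(1 - s²) / r²` times `∫∫ f(u) f(v) du dv = 1`.
-/

theorem lintegral_comp_linearMap_add {E : Type*} [NormedAddCommGroup E] [NormedSpace ℝ E]
    [MeasurableSpace E] [BorelSpace E] [FiniteDimensional ℝ E] (μ : Measure E) [μ.IsAddHaarMeasure]
    {L : E →ₗ[ℝ] E} (hL : LinearMap.det L ≠ 0) (F : E → ENNReal) (c : E) :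
    ∫⁻ p, F (L p + c) ∂μ = ENNReal.ofReal |(LinearMap.det L)⁻¹| * ∫⁻ q, F q ∂μ := by
  let e : E ≃ᵐ E :=
    (L.equivOfDetNeZero hL).toContinuousLinearEquiv.toHomeomorph.toMeasurableEquiv
  have he : (e : E → E) = L := rfl
  calc ∫⁻ p, F (L p + c) ∂μ = ∫⁻ q, F (q + c) ∂(μ.map L) := by
        rw [← he, lintegral_map_equiv]
    _ = _ := by
        rw [Measure.map_linearMap_addHaar_eq_smul_addHaar μ hL, lintegral_smul_measure,
          lintegral_add_right_eq_self F c, smul_eq_mul]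

theorem lintegral_prod_mul_le {α β : Type*} [MeasurableSpace α] [MeasurableSpace β]
    {μ : Measure α} {ν : Measure β} [SFinite μ] {F : α → ENNReal} {G : β → ENNReal}
    (hF : ∀ a, F a ≠ ⊤) (hG : ∫⁻ b, G b ∂ν ≠ ⊤) :
    ∫⁻ q, F q.1 * G q.2 ∂μ.prod ν ≤ (∫⁻ a, F a ∂μ) * ∫⁻ b, G b ∂ν :=
  (lintegral_prod_le _).trans_eq <| by
    simp_rw [lintegral_const_mul' _ _ (hF _)]
    exact lintegral_mul_const' _ _ hG

/-- The linear part of `(y₀, z₀) ↦ (y₁*, z₁*)`. -/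
noncomputable def starLinear (r s : ℝ) : ℝ × ℝ →ₗ[ℝ] ℝ × ℝ :=
  Matrix.toLin (Module.Basis.finTwoProd ℝ) (Module.Basis.finTwoProd ℝ)
    !![s * r / (1 - s ^ 2), -(r / (1 - s ^ 2)); -(r / (1 - s ^ 2)), s * r / (1 - s ^ 2)]

theorem starLinear_apply (r s : ℝ) (p : ℝ × ℝ) :
    starLinear r s p = (s * r / (1 - s ^ 2) * p.1 - r / (1 - s ^ 2) * p.2,
      s * r / (1 - s ^ 2) * p.2 - r / (1 - s ^ 2) * p.1) := by
  rw [starLinear, Matrix.toLin_finTwoProd_apply]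
  ext <;> ring

theorem det_starLinear {r s : ℝ} (hs : 1 - s ^ 2 ≠ 0) :
    LinearMap.det (starLinear r s) = -(r ^ 2 / (1 - s ^ 2)) := by
  rw [starLinear, LinearMap.det_toLin, Matrix.det_fin_two_of]
  field_simp
  ring

theorem star_eq_starLinear_add {r s : ℝ} (hs0 : 0 ≤ s) (hs1 : s < 1) (x : ℝ) (p : ℝ × ℝ) :
    ((x - r * p.2 - s * (x - r * p.1)) / (1 - s ^ 2),
      (x - r * p.1 - s * (x - r * p.2)) / (1 - s ^ 2)) =
      starLinear r s p + (x / (1 + s), x / (1 + s)) := by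
  have h1 : 1 + s ≠ 0 := by linarith
  have h2 : 1 - s ^ 2 ≠ 0 := by nlinarith
  rw [starLinear_apply]
  ext <;> simp only [Prod.fst_add, Prod.snd_add] <;> field_simp <;> ring

theorem arma11_alpha11_A1_bound_general
    (f : ℝ → ℝ) (hf_nonneg : ∀ t, 0 ≤ f t)
    (hf_int : ∫⁻ t : ℝ, ENNReal.ofReal (f t) = 1)
    (r s x : ℝ) (hr : 0 < r) (hs0 : 0 ≤ s) (hs1 : s < 1) :
    ∫⁻ p in {p : ℝ × ℝ | x < p.1 ∧ p.1 < p.2},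
        ENNReal.ofReal
          (f ((x - r * p.2 - s * (x - r * p.1)) / (1 - s ^ 2)) *
           f ((x - r * p.1 - s * (x - r * p.2)) / (1 - s ^ 2)))
      ≤ ENNReal.ofReal ((1 - s ^ 2) / r ^ 2) := by
  have hs : 0 < 1 - s ^ 2 := by nlinarith
  have hdet := det_starLinear (r := r) hs.ne'
  have hdet_ne : LinearMap.det (starLinear r s) ≠ 0 := by
    rw [hdet]
    exact neg_ne_zero.2 (by positivity)
  have habs : |(LinearMap.det (starLinear r s))⁻¹| = (1 - s ^ 2) / r ^ 2 := by
    rw [hdet, inv_neg, abs_neg, inv_div, abs_of_pos (by positivity)]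
  let F : ℝ × ℝ → ENNReal := fun q => ENNReal.ofReal (f q.1) * ENNReal.ofReal (f q.2)
  calc _ ≤ ∫⁻ p : ℝ × ℝ, F (starLinear r s p + (x / (1 + s), x / (1 + s))) := by
        refine (setLIntegral_le_lintegral _ _).trans_eq (lintegral_congr fun p => ?_)
        rw [← star_eq_starLinear_add hs0 hs1, ENNReal.ofReal_mul (hf_nonneg _)]
    _ = ENNReal.ofReal ((1 - s ^ 2) / r ^ 2) * ∫⁻ q, F q := by
        rw [lintegral_comp_linearMap_add _ hdet_ne, habs]
    _ ≤ ENNReal.ofReal ((1 - s ^ 2) / r ^ 2) * 1 := by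
        gcongr
        calc ∫⁻ q, F q ∂(volume.prod volume)
            ≤ (∫⁻ t, ENNReal.ofReal (f t)) * ∫⁻ t, ENNReal.ofReal (f t) :=
              lintegral_prod_mul_le (fun _ => ENNReal.ofReal_ne_top)
                (hf_int.trans_ne ENNReal.one_ne_top)
          _ = 1 := by rw [hf_int, mul_one]
    _ = _ := mul_one _

/-- from the proof of Theorem 3.2: the `A₁ = {x < y₀ < z₀}` part
of the double-delta term `α₁₁`, with `y₁* = (x − r·z₀ − s·(x − r·y₀))/(1−s²)`
and `z₁* = (x − r·y₀ − s·(x − r·z₀))/(1−s²)`, is bounded by `(1−s²)/r²`. -/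
theorem arma11_alpha11_A1_bound
    (f : ℝ → ℝ) (hf_meas : Measurable f) (hf_nonneg : ∀ t, 0 ≤ f t)
    (hf_int : ∫⁻ t : ℝ, ENNReal.ofReal (f t) = 1)
    (r s x : ℝ) (hr : 0 < r) (hs0 : 0 ≤ s) (hs1 : s < 1) :
    ∫⁻ p in {p : ℝ × ℝ | x < p.1 ∧ p.1 < p.2},
        ENNReal.ofReal
          (f ((x - r * p.2 - s * (x - r * p.1)) / (1 - s ^ 2)) *
           f ((x - r * p.1 - s * (x - r * p.2)) / (1 - s ^ 2)))
      ≤ ENNReal.ofReal ((1 - s ^ 2) / r ^ 2) :=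
  arma11_alpha11_A1_bound_general f hf_nonneg hf_int r s x hr hs0 hs1
end

section
/- Let f : ℝ → [0, ∞) be a measurable function with ∫_ℝ f = 1 (a probability density), and fix real numbers 0 < r < 1, 0 ≤ s < 1, and x. Then ∫∫_{y₀ < z₀ < x} f( ((1 + s·r)·y₀ − (r + s)·z₀)/(1 − s²) ) · f( ((1 + s·r)·z₀ − (r + s)·y₀)/(1 − s²) ) dy₀ dz₀ ≤ (1 − s²)/(1 − r²). -/
/-!
Enlarging the region to the whole plane, the integrand is `g (L p)` for the product density
`g (u, v) = f u * f v` and the linear map `L` with matrix `[[a, -b], [-b, a]]`, where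
`a = (1 + s r) / (1 - s²)` and `b = (r + s) / (1 - s²)`. By the linear change of variables,
`∫ g ∘ L = |det L|⁻¹ ∫ g = |det L|⁻¹`, and `det L = a² - b² = (1 - r²) / (1 - s²)`.
-/

open MeasureTheory
open scoped ENNReal

theorem lintegral_comp_linearMap_addHaar {E : Type*} [NormedAddCommGroup E] [NormedSpace ℝ E]
    [MeasurableSpace E] [BorelSpace E] [FiniteDimensional ℝ E] (μ : Measure E)
    [μ.IsAddHaarMeasure] {L : E →ₗ[ℝ] E} (hL : LinearMap.det L ≠ 0) (g : E → ℝ≥0∞) :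
    ∫⁻ x, g (L x) ∂μ = ENNReal.ofReal |(LinearMap.det L)⁻¹| * ∫⁻ x, g x ∂μ := by
  let e := (L.equivOfDetNeZero hL).toContinuousLinearEquiv.toHomeomorph.toMeasurableEquiv
  rw [← smul_eq_mul, ← lintegral_smul_measure,
    ← Measure.map_linearMap_addHaar_eq_smul_addHaar μ hL]
  exact (lintegral_map_equiv g e).symm

noncomputable def scaleSubSwap (a b : ℝ) : ℝ × ℝ →ₗ[ℝ] ℝ × ℝ :=
  Matrix.toLin (Module.Basis.finTwoProd ℝ) (Module.Basis.finTwoProd ℝ) !![a, -b; -b, a]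

@[simp]
theorem scaleSubSwap_apply (a b : ℝ) (p : ℝ × ℝ) :
    scaleSubSwap a b p = (a * p.1 - b * p.2, a * p.2 - b * p.1) := by
  rw [scaleSubSwap, Matrix.toLin_finTwoProd_apply]
  ext <;> simp only <;> ring

theorem det_scaleSubSwap (a b : ℝ) : LinearMap.det (scaleSubSwap a b) = a ^ 2 - b ^ 2 := by
  rw [scaleSubSwap, LinearMap.det_toLin, Matrix.det_fin_two_of]
  ring

theorem lintegral_mul_comp_scaleSubSwap {g₁ g₂ : ℝ → ℝ≥0∞} (hg₁ : AEMeasurable g₁)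
    (hg₂ : AEMeasurable g₂) {a b : ℝ} (hab : a ^ 2 ≠ b ^ 2) :
    ∫⁻ p : ℝ × ℝ, g₁ (a * p.1 - b * p.2) * g₂ (a * p.2 - b * p.1) =
      ENNReal.ofReal |(a ^ 2 - b ^ 2)⁻¹| * ((∫⁻ t, g₁ t) * ∫⁻ t, g₂ t) := by
  have hdet : LinearMap.det (scaleSubSwap a b) ≠ 0 := by
    rw [det_scaleSubSwap]
    exact sub_ne_zero.mpr hab
  rw [← lintegral_prod_mul hg₁ hg₂, ← Measure.volume_eq_prod, ← det_scaleSubSwap,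
    ← lintegral_comp_linearMap_addHaar volume hdet]
  simp only [scaleSubSwap_apply]

/-- from the proof of Theorem 3.2: the `A₃ = {y₀ < z₀ < x}` part
of the double-delta term `α₁₁`, with
`y₁* = ((1+s·r)·y₀ − (r+s)·z₀)/(1−s²)` and
`z₁* = ((1+s·r)·z₀ − (r+s)·y₀)/(1−s²)`, is bounded by `(1−s²)/(1−r²)`. -/
theorem arma11_alpha11_A3_bound
    (f : ℝ → ℝ) (hf_meas : Measurable f) (hf_nonneg : ∀ t, 0 ≤ f t)
    (hf_int : ∫⁻ t : ℝ, ENNReal.ofReal (f t) = 1)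
    (r s x : ℝ) (hr0 : 0 < r) (hr1 : r < 1) (hs0 : 0 ≤ s) (hs1 : s < 1) :
    ∫⁻ p in {p : ℝ × ℝ | p.1 < p.2 ∧ p.2 < x},
        ENNReal.ofReal
          (f (((1 + s * r) * p.1 - (r + s) * p.2) / (1 - s ^ 2)) *
           f (((1 + s * r) * p.2 - (r + s) * p.1) / (1 - s ^ 2)))
      ≤ ENNReal.ofReal ((1 - s ^ 2) / (1 - r ^ 2)) := by
  have hs2 : 0 < 1 - s ^ 2 := by nlinarith
  have hr2 : 0 < 1 - r ^ 2 := by nlinarith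
  have hdet : ((1 + s * r) / (1 - s ^ 2)) ^ 2 - ((r + s) / (1 - s ^ 2)) ^ 2 =
      (1 - r ^ 2) / (1 - s ^ 2) := by
    field_simp
    ring
  have hab : ((1 + s * r) / (1 - s ^ 2)) ^ 2 ≠ ((r + s) / (1 - s ^ 2)) ^ 2 := by
    rw [← sub_ne_zero, hdet]
    positivity
  have hdens : AEMeasurable fun t => ENNReal.ofReal (f t) := hf_meas.ennreal_ofReal.aemeasurable
  calc _ ≤ ∫⁻ p : ℝ × ℝ,
          ENNReal.ofReal (f ((1 + s * r) / (1 - s ^ 2) * p.1 - (r + s) / (1 - s ^ 2) * p.2)) *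
          ENNReal.ofReal (f ((1 + s * r) / (1 - s ^ 2) * p.2 - (r + s) / (1 - s ^ 2) * p.1)) := by
        refine (setLIntegral_le_lintegral _ _).trans_eq (lintegral_congr fun p => ?_)
        rw [← ENNReal.ofReal_mul (hf_nonneg _)]
        ring_nf
    _ = ENNReal.ofReal ((1 - s ^ 2) / (1 - r ^ 2)) := by
        rw [lintegral_mul_comp_scaleSubSwap hdens hdens hab, hdet, hf_int, mul_one, mul_one,
          abs_of_pos (by positivity), inv_div]
end
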